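/- If P is a random variable with density f(p|ξ) = ξ·p^(ξ-1) on (0,1) (i.e., P ~ Beta(ξ,1)) with ξ ≥ 1, then for every α ∈ [0,1], P(B_L(P,ξ) ≤ α) ≤ α, where B_L(p,ξ) = -e·ξ·p^ξ·log(p) for p < e⁻¹ and B_L(p,ξ) = 1 otherwise. That is, B_L(P,ξ) is a valid p-value under the Beta(ξ,1) distribution. -/

import Mathlib

open MeasureTheory

/-- The robust lower bound `B_L(p, ξ)`. -/
noncomputable def BL (ξ p : ℝ) : ℝ :=
  if p < Real.exp (-1) then -(Real.exp 1) * ξ * p ^ ξ * Real.log p else 1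

theorem stmt_6 (ξ : ℝ) (hξ : 1 ≤ ξ) (μ : Measure ℝ)
    (hμ : μ = volume.withDensity
      (fun p => ENNReal.ofReal (if p ∈ Set.Ioo (0 : ℝ) 1 then ξ * p ^ (ξ - 1) else 0)))
    (α : ℝ) (hα : α ∈ Set.Icc (0 : ℝ) 1) :
    μ {p : ℝ | BL ξ p ≤ α} ≤ ENNReal.ofReal α := by
  obtain ⟨hα0, hα1⟩ := hα
  have hξ0 : (0:ℝ) < ξ := lt_of_lt_of_le one_pos hξ
  set t : ℝ := α ^ ξ⁻¹ with ht
  have ht0 : 0 ≤ t := Real.rpow_nonneg hα0 _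
  have ht1 : t ≤ 1 := Real.rpow_le_one hα0 hα1 (by positivity)
  -- pointwise: inside (0,1), BL ≤ α implies p ≤ t
  have hsub : {p : ℝ | BL ξ p ≤ α} ⊆ Set.Ioc 0 t ∪ (Set.Ioo (0:ℝ) 1)ᶜ := by
    intro p hp
    by_cases hmem : p ∈ Set.Ioo (0:ℝ) 1
    · left
      obtain ⟨hp0, hp1⟩ := hmem
      have hBL : p ^ ξ ≤ α := by
        simp only [Set.mem_setOf_eq, BL] at hp
        by_cases hpe : p < Real.exp (-1)
        · rw [if_pos hpe] at hp
          refine le_trans ?_ hp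
          have hlog : Real.log p ≤ -1 := by
            have h := Real.log_lt_log hp0 hpe
            rw [Real.log_exp] at h
            exact h.le
          have hpξ : (0:ℝ) ≤ p ^ ξ := Real.rpow_nonneg hp0.le _
          have he : (2:ℝ) ≤ Real.exp 1 := by
            have := Real.add_one_le_exp (1:ℝ); linarith
          nlinarith [mul_nonneg hpξ (by linarith : (0:ℝ) ≤ -Real.log p - 1),
            mul_nonneg (mul_nonneg hpξ (by linarith : (0:ℝ) ≤ -Real.log p))
              (by nlinarith : (0:ℝ) ≤ Real.exp 1 * ξ - 1)]
        · rw [if_neg hpe] at hp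
          exact le_trans (Real.rpow_le_one hp0.le hp1.le hξ0.le) hp
      refine ⟨hp0, ?_⟩
      calc p = (p ^ ξ) ^ ξ⁻¹ := (Real.rpow_rpow_inv hp0.le hξ0.ne').symm
        _ ≤ α ^ ξ⁻¹ := Real.rpow_le_rpow (Real.rpow_nonneg hp0.le _) hBL (by positivity)
    · right; exact hmem
  have hzero : μ (Set.Ioo (0:ℝ) 1)ᶜ = 0 := by
    rw [hμ, withDensity_apply _ measurableSet_Ioo.compl]
    have h : ∀ p ∈ (Set.Ioo (0:ℝ) 1)ᶜ,
        ENNReal.ofReal (if p ∈ Set.Ioo (0:ℝ) 1 then ξ * p ^ (ξ - 1) else 0) = (0 : ENNReal) :=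
      fun p hp => by rw [if_neg hp, ENNReal.ofReal_zero]
    rw [setLIntegral_congr_fun (g := fun _ => 0) measurableSet_Ioo.compl h,
      lintegral_zero]
  have hmain : μ (Set.Ioc 0 t) ≤ ENNReal.ofReal α := by
    rw [hμ, withDensity_apply _ measurableSet_Ioc]
    have hle : ∫⁻ p in Set.Ioc (0:ℝ) t,
        ENNReal.ofReal (if p ∈ Set.Ioo (0 : ℝ) 1 then ξ * p ^ (ξ - 1) else 0)
        ≤ ∫⁻ p in Set.Ioc (0:ℝ) t, ENNReal.ofReal (ξ * p ^ (ξ - 1)) := by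
      refine setLIntegral_mono' measurableSet_Ioc ?_
      intro p hp
      refine ENNReal.ofReal_le_ofReal ?_
      split_ifs with h
      · exact le_rfl
      · exact mul_nonneg hξ0.le (Real.rpow_nonneg hp.1.le _)
    refine le_trans hle ?_
    have hint : IntegrableOn (fun p : ℝ => ξ * p ^ (ξ - 1)) (Set.Ioc 0 t) volume := by
      have : IntervalIntegrable (fun p : ℝ => ξ * p ^ (ξ - 1)) volume 0 t :=
        (intervalIntegral.intervalIntegrable_rpow (by left; linarith)).const_mul ξ
      exact this.1
    rw [← ofReal_integral_eq_lintegral_ofReal hint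
      (ae_restrict_of_forall_mem measurableSet_Ioc ?_)]
    · refine ENNReal.ofReal_le_ofReal ?_
      have : ∫ p in Set.Ioc (0:ℝ) t, ξ * p ^ (ξ - 1) = ∫ p in (0:ℝ)..t, ξ * p ^ (ξ - 1) := by
        rw [intervalIntegral.integral_of_le ht0]
      rw [this, intervalIntegral.integral_const_mul, integral_rpow (by left; linarith)]
      have h0 : (0:ℝ) ^ (ξ - 1 + 1) = 0 := by
        rw [Real.zero_rpow (by linarith)]
      rw [h0, sub_zero, show ξ - 1 + 1 = ξ by ring]
      rw [mul_div_cancel₀ _ hξ0.ne']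
      rw [ht, Real.rpow_inv_rpow hα0 hξ0.ne']
    · intro p hp
      exact mul_nonneg hξ0.le (Real.rpow_nonneg hp.1.le _)
  calc μ {p : ℝ | BL ξ p ≤ α} ≤ μ (Set.Ioc 0 t ∪ (Set.Ioo (0:ℝ) 1)ᶜ) := measure_mono hsub
    _ ≤ μ (Set.Ioc 0 t) + μ (Set.Ioo (0:ℝ) 1)ᶜ := measure_union_le _ _
    _ = μ (Set.Ioc 0 t) := by rw [hzero, add_zero]
    _ ≤ ENNReal.ofReal α := hmain
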